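/- Let f : ℝⁿ → ℝ be differentiable, L-smooth and γ-quasar-convex with respect to a minimizer x* (γ ∈ (0,1]), satisfying the quadratic growth condition f(x) − f* ≥ (μ/2)‖x − x*‖² with μ > 0, where f* = f(x*). Let g : ℝⁿ → ℝⁿ satisfy ‖g(x) − ∇f(x)‖ ≤ δ₁ for all x (δ₁ ≥ 0). Let the Nemirovski Conjugate Gradient method generate from x₀: q₋₁ = 0, x̂_k an exact minimizer of f over the affine subspace x₀ + span(x_k − x₀, q_{k−1}), x_{k+1} = x̂_k − (1/(2L))·g(x̂_k), q_k = q_{k−1} + g(x̂_k), and suppose ‖g(x̂_k)‖ ≥ 2δ₁ at every iteration. Then for any β ∈ (0,1), after T = ⌈(2/(γβ))·√(2(1−β)L/μ)⌉ iterations, f(x_T) − f* ≤ β·ε₀ + (4/γ)·√(2ε₀/μ)·δ₁, where ε₀ = f(x₀) − f*. -/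

import Mathlib

/-!
Since `x̂ₖ` minimises `f` over a plane containing `x̂ₖ - x₀` and `qₖ`, the gradient `∇f(x̂ₖ)` is
orthogonal to both. Orthogonality to `x̂ₖ - x₀` turns quasar-convexity at `x̂ₖ` into
`γ (f(x̂ₖ) - f*) ≤ ⟪∇f(x̂ₖ), x₀ - x*⟫`; as `f(xₖ)` decreases, summing over `k < T` gives
`γ T (f(x_T) - f*) ≤ (‖q_T‖ + T δ₁) ‖x₀ - x*‖`. Orthogonality to `qₖ` makes `‖q_T‖` grow like
`δ₁ T + (∑ ‖g(x̂ₖ)‖²)^½`, and the gradient steps pay for `∑ ‖g(x̂ₖ)‖²` with the decrease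
`4 L (f(x₀) - f(x_T))`, up to `δ₁`-terms. Quadratic growth gives `‖x₀ - x*‖ ≤ √(2 ε₀ / μ)`; if
`f(x_T) - f*` exceeds `β ε₀` the decrease is at most `(1 - β) ε₀`, and the choice of `T` closes
the estimate.
-/

open scoped RealInnerProductSpace

open Finset

theorem le_add_of_sq_le_mul_add_sq {a b c : ℝ} (hb : 0 ≤ b) (hc : 0 ≤ c)
    (h : a ^ 2 ≤ b * a + c ^ 2) : a ≤ b + c := by
  nlinarith [mul_nonneg hb hc, sq_nonneg (a - c), sq_nonneg (a - b - c)]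

theorem sqrt_sum_sq_le_of_sum_sub_le {a : ℕ → ℝ} {δ c : ℝ} (hδ : 0 ≤ δ) (hc : 0 ≤ c) (n : ℕ)
    (h : ∑ k ∈ range n, (a k ^ 2 - δ * a k) ≤ c ^ 2) :
    √(∑ k ∈ range n, a k ^ 2) ≤ δ * √n + c := by
  set S := ∑ k ∈ range n, a k ^ 2
  have hS : 0 ≤ S := sum_nonneg fun k _ => sq_nonneg _
  have hcs : ∑ k ∈ range n, a k ≤ √n * √S := by
    rw [← Real.sqrt_mul n.cast_nonneg]
    refine (le_abs_self _).trans (Real.abs_le_sqrt ?_)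
    simpa using sq_sum_le_card_mul_sum_sq (s := range n) (f := a)
  rw [sum_sub_distrib, ← mul_sum] at h
  refine le_add_of_sq_le_mul_add_sq (by positivity) hc ?_
  nlinarith [Real.sq_sqrt hS, mul_le_mul_of_nonneg_left hcs hδ]

theorem le_add_of_mul_le_add_sqrt {γ β L μ δ ε₀ ε T : ℝ} (hγ : 0 < γ) (hβ0 : 0 < β) (hβ1 : β < 1)
    (hL : 0 < L) (hμ : 0 < μ) (hδ : 0 ≤ δ) (hε₀ : 0 ≤ ε₀)
    (hT : 2 / (γ * β) * √(2 * (1 - β) * L / μ) ≤ T)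
    (h : γ * T * ε ≤ (4 * δ * T + 2 * √(L * (ε₀ - ε))) * √(2 * ε₀ / μ)) :
    ε ≤ β * ε₀ + 4 / γ * √(2 * ε₀ / μ) * δ := by
  set R := √(2 * ε₀ / μ)
  set W := √(2 * (1 - β) * L / μ)
  have hW : 0 < W := Real.sqrt_pos.mpr (by have := sub_pos.mpr hβ1; positivity)
  have hT0 : 0 < T := lt_of_lt_of_le (by positivity) hT
  rcases le_or_gt ε (β * ε₀) with hε | hε
  · have : 0 ≤ 4 / γ * R * δ := by positivity
    linarith
  have hdecr : ε₀ - ε ≤ (1 - β) * ε₀ := by linarith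
  have hsqrt : √(L * (ε₀ - ε)) * R ≤ ε₀ * W :=
    calc √(L * (ε₀ - ε)) * R = √(2 * L * ε₀ / μ * (ε₀ - ε)) := by
          rw [← Real.sqrt_mul' _ (by positivity)]; ring_nf
      _ ≤ √(2 * L * ε₀ / μ * ((1 - β) * ε₀)) := by gcongr
      _ = ε₀ * W := by
          rw [show 2 * L * ε₀ / μ * ((1 - β) * ε₀) = 2 * (1 - β) * L / μ * ε₀ ^ 2 by ring,
            Real.sqrt_mul' _ (sq_nonneg _), Real.sqrt_sq hε₀, mul_comm]
  have hTW : 2 * ε₀ * W ≤ γ * β * T * ε₀ := by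
    have := mul_le_mul_of_nonneg_left hT (by positivity : 0 ≤ γ * β * ε₀)
    calc 2 * ε₀ * W = γ * β * ε₀ * (2 / (γ * β) * W) := by field_simp
      _ ≤ γ * β * T * ε₀ := by linarith
  refine le_of_mul_le_mul_left ?_ (mul_pos hγ hT0)
  calc γ * T * ε ≤ 4 * δ * T * R + 2 * (√(L * (ε₀ - ε)) * R) := by linarith
    _ ≤ γ * T * (β * ε₀ + 4 / γ * R * δ) := by
        have : γ * T * (β * ε₀ + 4 / γ * R * δ) = γ * β * T * ε₀ + 4 * δ * T * R := by
          field_simp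
        linarith

section InnerProduct

variable {E : Type*} [NormedAddCommGroup E] [InnerProductSpace ℝ E]

theorem inner_le_inner_add_of_norm_sub_le {a b : E} {δ : ℝ} (h : ‖a - b‖ ≤ δ) (v : E) :
    ⟪a, v⟫ ≤ ⟪b, v⟫ + δ * ‖v‖ := by
  have hcs := real_inner_le_norm (a - b) v
  rw [inner_sub_left] at hcs
  nlinarith [mul_le_mul_of_nonneg_right h (norm_nonneg v)]

theorem norm_le_mul_add_sqrt_sum_sq {q v : ℕ → E} {δ : ℝ} (hδ : 0 ≤ δ) (h0 : q 0 = 0)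
    (hsucc : ∀ k, q (k + 1) = q k + v k) (hinner : ∀ k, ⟪q k, v k⟫ ≤ δ * ‖q k‖) (m : ℕ) :
    ‖q m‖ ≤ δ * m + √(∑ k ∈ range m, ‖v k‖ ^ 2) := by
  induction m with
  | zero => simp [h0]
  | succ m ih =>
    set S := ∑ k ∈ range m, ‖v k‖ ^ 2
    have hS : 0 ≤ S := sum_nonneg fun k _ => sq_nonneg _
    have hS' : √S ≤ √(S + ‖v m‖ ^ 2) := Real.sqrt_le_sqrt (by linarith [sq_nonneg ‖v m‖])
    have hsq : ‖q (m + 1)‖ ^ 2 ≤ (‖q m‖ + δ) ^ 2 + ‖v m‖ ^ 2 := by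
      rw [hsucc, norm_add_sq_real]
      nlinarith [hinner m]
    have hB : 0 ≤ δ * (m + 1) := by positivity
    have hA : ‖q m‖ + δ ≤ δ * (m + 1) + √S := by linarith
    rw [sum_range_succ, Nat.cast_succ]
    refine (sq_le_sq₀ (norm_nonneg _) (by positivity)).mp (hsq.trans ?_)
    nlinarith [Real.sq_sqrt hS, Real.sq_sqrt (add_nonneg hS (sq_nonneg ‖v m‖)),
      pow_le_pow_left₀ (by positivity) hA 2, mul_le_mul_of_nonneg_left hS' hB]

end InnerProduct

section Gradient

variable {E : Type*} [NormedAddCommGroup E] [InnerProductSpace ℝ E] [CompleteSpace E]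
  {f : E → ℝ}

theorem hasDerivAt_comp_add_smul {x v : E} {t : ℝ} (hf : DifferentiableAt ℝ f (x + t • v)) :
    HasDerivAt (fun s : ℝ => f (x + s • v)) ⟪gradient f (x + t • v), v⟫ t := by
  have hline : HasDerivAt (fun s : ℝ => x + s • v) v t := by
    simpa using ((hasDerivAt_id t).smul_const v).const_add x
  simpa [InnerProductSpace.toDual_apply_apply, Function.comp_def] using
    hf.hasGradientAt.hasFDerivAt.comp_hasDerivAt t hline

theorem inner_gradient_eq_zero_of_forall_le_add_smul {x v : E} (hf : DifferentiableAt ℝ f x)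
    (hmin : ∀ t : ℝ, f x ≤ f (x + t • v)) : ⟪gradient f x, v⟫ = 0 := by
  have hloc : IsLocalMin (fun t : ℝ => f (x + t • v)) 0 :=
    Filter.Eventually.of_forall fun t => by simpa using hmin t
  simpa using hloc.hasDerivAt_eq_zero (hasDerivAt_comp_add_smul (t := 0) (by simpa using hf))

theorem inner_gradient_eq_zero_of_forall_le_plane {p u w y : E} (hf : DifferentiableAt ℝ f y)
    (hy : ∃ a b : ℝ, y = p + a • u + b • w) (hmin : ∀ a b : ℝ, f y ≤ f (p + a • u + b • w)) :
    ⟪gradient f y, u⟫ = 0 ∧ ⟪gradient f y, w⟫ = 0 := by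
  obtain ⟨a, b, rfl⟩ := hy
  refine ⟨inner_gradient_eq_zero_of_forall_le_add_smul hf fun t => ?_,
    inner_gradient_eq_zero_of_forall_le_add_smul hf fun t => ?_⟩
  · convert hmin (a + t) b using 2; module
  · convert hmin a (b + t) using 2; module

theorem le_add_inner_gradient_add_sq {L : ℝ} (hf : Differentiable ℝ f)
    (hsmooth : ∀ x y, ‖gradient f x - gradient f y‖ ≤ L * ‖x - y‖) (x y : E) :
    f y ≤ f x + ⟪gradient f x, y - x⟫ + L / 2 * ‖y - x‖ ^ 2 := by
  set v := y - x
  let φ : ℝ → ℝ := fun t => f (x + t • v) - t * ⟪gradient f x, v⟫ - L / 2 * ‖v‖ ^ 2 * t ^ 2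
  have hφ : ∀ t, HasDerivAt φ
      (⟪gradient f (x + t • v), v⟫ - ⟪gradient f x, v⟫ - L / 2 * ‖v‖ ^ 2 * (2 * t)) t := by
    intro t
    exact (((hasDerivAt_comp_add_smul (hf _)).sub ((hasDerivAt_id t).mul_const
      ⟪gradient f x, v⟫)).sub ((hasDerivAt_pow 2 t).const_mul (L / 2 * ‖v‖ ^ 2))).congr_deriv
      (by norm_num)
  have hanti : AntitoneOn φ (Set.Ici 0) := by
    refine antitoneOn_of_hasDerivWithinAt_nonpos (convex_Ici 0)
      (fun t _ => (hφ t).continuousAt.continuousWithinAt) (fun t _ => (hφ t).hasDerivWithinAt)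
      fun t ht => ?_
    rw [interior_Ici, Set.mem_Ioi] at ht
    have hcs := inner_le_inner_add_of_norm_sub_le (hsmooth (x + t • v) x) v
    rw [add_sub_cancel_left, norm_smul, Real.norm_of_nonneg ht.le] at hcs
    nlinarith
  have h01 := hanti (Set.mem_Ici.mpr le_rfl) (Set.mem_Ici.mpr zero_le_one) zero_le_one
  simp only [φ, zero_smul, add_zero, one_smul, zero_mul, sub_zero, one_mul, one_pow, mul_one,
    ne_eq, OfNat.ofNat_ne_zero, not_false_eq_true, zero_pow, v, add_sub_cancel] at h01
  linarith

theorem le_sub_of_inexact_gradient_step {L δ : ℝ} (hf : Differentiable ℝ f)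
    (hsmooth : ∀ x y, ‖gradient f x - gradient f y‖ ≤ L * ‖x - y‖) (hL : 0 < L) {y g : E}
    (hg : ‖g - gradient f y‖ ≤ δ) (hbig : 2 * δ ≤ ‖g‖) :
    f (y - (1 / (2 * L)) • g) ≤ f y - (‖g‖ ^ 2 - δ * ‖g‖) / (4 * L) := by
  have hdesc := le_add_inner_gradient_add_sq hf hsmooth y (y - (1 / (2 * L)) • g)
  have hinexact := inner_le_inner_add_of_norm_sub_le hg g
  rw [sub_sub_cancel_left, inner_neg_right, inner_smul_right, norm_neg, norm_smul,
    Real.norm_of_nonneg (by positivity)] at hdesc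
  rw [real_inner_self_eq_norm_sq] at hinexact
  have key : (1 / (2 * L)) * ⟪gradient f y, g⟫ - L / 2 * (1 / (2 * L) * ‖g‖) ^ 2
      - (‖g‖ ^ 2 - δ * ‖g‖) / (4 * L)
      = (4 * (⟪gradient f y, g⟫ - (‖g‖ ^ 2 - δ * ‖g‖)) + ‖g‖ * (‖g‖ - 2 * δ)) / (8 * L) := by
    field_simp; ring
  have : 0 ≤ (4 * (⟪gradient f y, g⟫ - (‖g‖ ^ 2 - δ * ‖g‖)) + ‖g‖ * (‖g‖ - 2 * δ)) / (8 * L) := by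
    apply div_nonneg _ (by positivity)
    nlinarith [norm_nonneg g]
  linarith

theorem mul_sub_le_inner_of_quasar {γ δ : ℝ} (hγ : 0 < γ) {y p xs g : E}
    (hquasar : f y + (1 / γ) * ⟪gradient f y, xs - y⟫ ≤ f xs)
    (horth : ⟪gradient f y, y - p⟫ = 0) (hg : ‖g - gradient f y‖ ≤ δ) :
    γ * (f y - f xs) ≤ ⟪g, p - xs⟫ + δ * ‖p - xs‖ := by
  have hsplit : xs - y = -(p - xs) - (y - p) := by abel
  rw [hsplit, inner_sub_right, inner_neg_right, horth] at hquasar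
  have hinexact := inner_le_inner_add_of_norm_sub_le (norm_sub_rev g _ ▸ hg) (p - xs)
  have hquasar' := mul_le_mul_of_nonneg_left hquasar hγ.le
  rw [mul_add, ← mul_assoc, mul_one_div_cancel hγ.ne', one_mul] at hquasar'
  linarith

end Gradient

section NemirovskiCG

variable {E : Type*} [NormedAddCommGroup E] [InnerProductSpace ℝ E]

/-- `q k` is the paper's `q_{k-1}`. -/
structure IsNemirovskiCGRun (f : E → ℝ) (g : E → E) (L : ℝ) (x xhat q : ℕ → E) : Prop where
  q_zero : q 0 = 0
  q_succ : ∀ k, q (k + 1) = q k + g (xhat k)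
  xhat_mem : ∀ k, ∃ a b : ℝ, xhat k = x 0 + a • (x k - x 0) + b • q k
  xhat_min : ∀ k, ∀ a b : ℝ, f (xhat k) ≤ f (x 0 + a • (x k - x 0) + b • q k)
  x_succ : ∀ k, x (k + 1) = xhat k - (1 / (2 * L)) • g (xhat k)

namespace IsNemirovskiCGRun

variable {f : E → ℝ} {g : E → E} {L δ : ℝ} {x xhat q : ℕ → E}

theorem inner_gradient_xhat_eq_zero [CompleteSpace E] (h : IsNemirovskiCGRun f g L x xhat q)
    (hf : Differentiable ℝ f) (k : ℕ) :
    ⟪gradient f (xhat k), xhat k - x 0⟫ = 0 ∧ ⟪gradient f (xhat k), q k⟫ = 0 := by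
  obtain ⟨hx, hq⟩ :=
    inner_gradient_eq_zero_of_forall_le_plane (hf _) (h.xhat_mem k) (h.xhat_min k)
  obtain ⟨a, b, hab⟩ := h.xhat_mem k
  have hdir : xhat k - x 0 = a • (x k - x 0) + b • q k := by rw [hab]; abel
  refine ⟨?_, hq⟩
  rw [hdir, inner_add_right, inner_smul_right, inner_smul_right, hx, hq, mul_zero, mul_zero,
    add_zero]

theorem f_xhat_le (h : IsNemirovskiCGRun f g L x xhat q) (k : ℕ) : f (xhat k) ≤ f (x k) := by
  simpa using h.xhat_min k 1 0

theorem f_x_succ_le [CompleteSpace E] (h : IsNemirovskiCGRun f g L x xhat q)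
    (hf : Differentiable ℝ f)
    (hsmooth : ∀ x y, ‖gradient f x - gradient f y‖ ≤ L * ‖x - y‖) (hL : 0 < L)
    (hg : ∀ y, ‖g y - gradient f y‖ ≤ δ) (hbig : ∀ k, 2 * δ ≤ ‖g (xhat k)‖) (k : ℕ) :
    f (x (k + 1)) ≤ f (xhat k) - (‖g (xhat k)‖ ^ 2 - δ * ‖g (xhat k)‖) / (4 * L) :=
  h.x_succ k ▸ le_sub_of_inexact_gradient_step hf hsmooth hL (hg _) (hbig k)

theorem q_eq_sum (h : IsNemirovskiCGRun f g L x xhat q) (m : ℕ) :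
    q m = ∑ k ∈ range m, g (xhat k) := by
  induction m with
  | zero => simp [h.q_zero]
  | succ m ih => rw [sum_range_succ, h.q_succ, ih]

theorem norm_q_le [CompleteSpace E] (h : IsNemirovskiCGRun f g L x xhat q)
    (hf : Differentiable ℝ f) (hδ : 0 ≤ δ) (hg : ∀ y, ‖g y - gradient f y‖ ≤ δ) (m : ℕ) :
    ‖q m‖ ≤ δ * m + √(∑ k ∈ range m, ‖g (xhat k)‖ ^ 2) :=
  norm_le_mul_add_sqrt_sum_sq hδ h.q_zero h.q_succ (fun k => by
    simpa [real_inner_comm, (h.inner_gradient_xhat_eq_zero hf k).2] using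
      inner_le_inner_add_of_norm_sub_le (hg (xhat k)) (q k)) m

theorem mul_sub_le_inner_q_add [CompleteSpace E] (h : IsNemirovskiCGRun f g L x xhat q)
    (hf : Differentiable ℝ f) {γ : ℝ} (hγ : 0 < γ) {xstar : E}
    (hquasar : ∀ y, f y + (1 / γ) * ⟪gradient f y, xstar - y⟫ ≤ f xstar)
    (hg : ∀ y, ‖g y - gradient f y‖ ≤ δ) {T : ℕ}
    (hlast : ∀ k ∈ range T, f (x T) ≤ f (xhat k)) :
    γ * T * (f (x T) - f xstar) ≤ ⟪q T, x 0 - xstar⟫ + T * (δ * ‖x 0 - xstar‖) :=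
  calc γ * T * (f (x T) - f xstar) = ∑ k ∈ range T, γ * (f (x T) - f xstar) := by
        rw [sum_const, card_range, nsmul_eq_mul]; ring
    _ ≤ ∑ k ∈ range T, (⟪g (xhat k), x 0 - xstar⟫ + δ * ‖x 0 - xstar‖) := by
        refine sum_le_sum fun k hk => le_trans ?_ (mul_sub_le_inner_of_quasar hγ (hquasar _)
          (h.inner_gradient_xhat_eq_zero hf k).1 (hg _))
        gcongr
        exact hlast k hk
    _ = ⟪q T, x 0 - xstar⟫ + T * (δ * ‖x 0 - xstar‖) := by
        rw [sum_add_distrib, ← sum_inner, ← h.q_eq_sum, sum_const, card_range, nsmul_eq_mul]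

theorem mul_sub_le [CompleteSpace E] (h : IsNemirovskiCGRun f g L x xhat q)
    (hf : Differentiable ℝ f) (hsmooth : ∀ x y, ‖gradient f x - gradient f y‖ ≤ L * ‖x - y‖)
    (hL : 0 < L) {γ : ℝ} (hγ : 0 < γ) {xstar : E}
    (hquasar : ∀ y, f y + (1 / γ) * ⟪gradient f y, xstar - y⟫ ≤ f xstar)
    (hδ : 0 ≤ δ) (hg : ∀ y, ‖g y - gradient f y‖ ≤ δ) (hbig : ∀ k, 2 * δ ≤ ‖g (xhat k)‖)
    (T : ℕ) :
    γ * T * (f (x T) - f xstar)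
      ≤ (3 * δ * T + 2 * √(L * (f (x 0) - f (x T)))) * ‖x 0 - xstar‖ := by
  set decrease := fun k => (‖g (xhat k)‖ ^ 2 - δ * ‖g (xhat k)‖) / (4 * L)
  have hdesc := h.f_x_succ_le hf hsmooth hL hg hbig
  have hdecrease : ∀ k, 0 ≤ decrease k := fun k =>
    div_nonneg (by nlinarith [hbig k, norm_nonneg (g (xhat k))]) (by positivity)
  have hanti : Antitone (f ∘ x) := antitone_nat_of_succ_le fun k =>
    (hdesc k).trans ((sub_le_self _ (hdecrease k)).trans (h.f_xhat_le k))
  have h0T : f (x T) ≤ f (x 0) := hanti T.zero_le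
  have htel : ∑ k ∈ range T, decrease k ≤ f (x 0) - f (x T) :=
    calc ∑ k ∈ range T, decrease k ≤ ∑ k ∈ range T, (f (x k) - f (x (k + 1))) :=
          sum_le_sum fun k _ => by linarith [hdesc k, h.f_xhat_le k]
      _ = f (x 0) - f (x T) := sum_range_sub' (fun k => f (x k)) T
  have hsum : ∑ k ∈ range T, (‖g (xhat k)‖ ^ 2 - δ * ‖g (xhat k)‖)
      ≤ (2 * √(L * (f (x 0) - f (x T)))) ^ 2 := by
    rw [mul_pow, Real.sq_sqrt (mul_nonneg hL.le (sub_nonneg.mpr h0T))]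
    have := mul_le_mul_of_nonneg_left htel (by positivity : (0 : ℝ) ≤ 4 * L)
    rw [mul_sum, sum_congr rfl fun k _ => mul_div_cancel₀ _ (by positivity : 4 * L ≠ 0)] at this
    linarith
  have hq := (h.norm_q_le hf hδ hg T).trans
    (add_le_add_right (sqrt_sum_sq_le_of_sum_sub_le hδ (by positivity) T hsum) _)
  have hquasar_sum := h.mul_sub_le_inner_q_add hf hγ hquasar hg (T := T) fun k hk =>
    (hanti (mem_range.mp hk)).trans ((hdesc k).trans (sub_le_self _ (hdecrease k)))
  have hsqrtT : √(T : ℝ) ≤ T := Real.sqrt_le_self_iff.mpr <| by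
    rcases Nat.eq_zero_or_pos T with hT | hT
    · left; simp [hT]
    · right; exact_mod_cast hT
  calc γ * T * (f (x T) - f xstar) ≤ (‖q T‖ + δ * T) * ‖x 0 - xstar‖ := by
        linarith [real_inner_le_norm (q T) (x 0 - xstar)]
    _ ≤ _ := mul_le_mul_of_nonneg_right
        (by linarith [mul_le_mul_of_nonneg_left hsqrtT hδ]) (norm_nonneg _)

end IsNemirovskiCGRun

end NemirovskiCG

theorem cg_convergence_inexact_general (n : ℕ) (f : EuclideanSpace ℝ (Fin n) → ℝ)
    (L γ μ δ₁ β : ℝ) (hL : 0 < L) (hγ0 : 0 < γ) (hμ : 0 < μ)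
    (hβ0 : 0 < β) (hβ1 : β < 1)
    (hf : Differentiable ℝ f)
    (hsmooth : ∀ x y, ‖gradient f x - gradient f y‖ ≤ L * ‖x - y‖)
    (xstar : EuclideanSpace ℝ (Fin n))
    (hquasar : ∀ x, f x + (1 / γ) * ⟪gradient f x, xstar - x⟫ ≤ f xstar)
    (hgrowth : ∀ x, μ / 2 * ‖x - xstar‖ ^ 2 ≤ f x - f xstar)
    (g : EuclideanSpace ℝ (Fin n) → EuclideanSpace ℝ (Fin n))
    (hg : ∀ x, ‖g x - gradient f x‖ ≤ δ₁)
    (x xhat q : ℕ → EuclideanSpace ℝ (Fin n))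
    (hq0 : q 0 = 0)
    (hqs : ∀ k, q (k + 1) = q k + g (xhat k))
    (hxhat_mem : ∀ k, ∃ a b : ℝ, xhat k = x 0 + a • (x k - x 0) + b • q k)
    (hxhat_min : ∀ k, ∀ a b : ℝ, f (xhat k) ≤ f (x 0 + a • (x k - x 0) + b • q k))
    (hxs : ∀ k, x (k + 1) = xhat k - (1 / (2 * L)) • g (xhat k))
    (hbig : ∀ k, 2 * δ₁ ≤ ‖g (xhat k)‖)
    (T : ℕ) (hT : T = ⌈(2 / (γ * β)) * Real.sqrt (2 * (1 - β) * L / μ)⌉₊) :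
    f (x T) - f xstar
      ≤ β * (f (x 0) - f xstar)
        + (4 / γ) * Real.sqrt (2 * (f (x 0) - f xstar) / μ) * δ₁ := by
  have hcg : IsNemirovskiCGRun f g L x xhat q := ⟨hq0, hqs, hxhat_mem, hxhat_min, hxs⟩
  have hδ₁ : 0 ≤ δ₁ := (norm_nonneg _).trans (hg 0)
  have hε₀ : 0 ≤ f (x 0) - f xstar := le_trans (by positivity) (hgrowth (x 0))
  have hdist : ‖x 0 - xstar‖ ≤ √(2 * (f (x 0) - f xstar) / μ) :=
    Real.le_sqrt_of_sq_le (by rw [le_div_iff₀ hμ]; linarith [hgrowth (x 0)])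
  have hgap := hcg.mul_sub_le hf hsmooth hL hγ0 hquasar hδ₁ hg hbig T
  refine le_add_of_mul_le_add_sqrt hγ0 hβ0 hβ1 hL hμ hδ₁ hε₀ (hT ▸ Nat.le_ceil _) (hgap.trans ?_)
  rw [sub_sub_sub_cancel_right]
  gcongr
  norm_num

/-- Convergence of Nemirovski's Conjugate Gradient method with a δ₁-inexact gradient
for L-smooth, γ-quasar-convex functions satisfying quadratic growth.
Here `q k` stands for `q_{k-1}` of the method (so `q 0 = 0`). -/
theorem cg_convergence_inexact (n : ℕ) (f : EuclideanSpace ℝ (Fin n) → ℝ)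
    (L γ μ δ₁ β : ℝ) (hL : 0 < L) (hγ0 : 0 < γ) (hγ1 : γ ≤ 1) (hμ : 0 < μ)
    (hδ₁ : 0 ≤ δ₁) (hβ0 : 0 < β) (hβ1 : β < 1)
    (hf : Differentiable ℝ f)
    (hsmooth : ∀ x y, ‖gradient f x - gradient f y‖ ≤ L * ‖x - y‖)
    (xstar : EuclideanSpace ℝ (Fin n)) (hmin : ∀ x, f xstar ≤ f x)
    (hquasar : ∀ x, f x + (1 / γ) * ⟪gradient f x, xstar - x⟫ ≤ f xstar)
    (hgrowth : ∀ x, μ / 2 * ‖x - xstar‖ ^ 2 ≤ f x - f xstar)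
    (g : EuclideanSpace ℝ (Fin n) → EuclideanSpace ℝ (Fin n))
    (hg : ∀ x, ‖g x - gradient f x‖ ≤ δ₁)
    (x xhat q : ℕ → EuclideanSpace ℝ (Fin n))
    (hq0 : q 0 = 0)
    (hqs : ∀ k, q (k + 1) = q k + g (xhat k))
    (hxhat_mem : ∀ k, ∃ a b : ℝ, xhat k = x 0 + a • (x k - x 0) + b • q k)
    (hxhat_min : ∀ k, ∀ a b : ℝ, f (xhat k) ≤ f (x 0 + a • (x k - x 0) + b • q k))
    (hxs : ∀ k, x (k + 1) = xhat k - (1 / (2 * L)) • g (xhat k))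
    (hbig : ∀ k, 2 * δ₁ ≤ ‖g (xhat k)‖)
    (T : ℕ) (hT : T = ⌈(2 / (γ * β)) * Real.sqrt (2 * (1 - β) * L / μ)⌉₊) :
    f (x T) - f xstar
      ≤ β * (f (x 0) - f xstar)
        + (4 / γ) * Real.sqrt (2 * (f (x 0) - f xstar) / μ) * δ₁ :=
  cg_convergence_inexact_general n f L γ μ δ₁ β hL hγ0 hμ hβ0 hβ1 hf hsmooth xstar hquasar hgrowth g
    hg x xhat q hq0 hqs hxhat_mem hxhat_min hxs hbig T hT
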